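/- arXiv:1503.02475 — 5 statements merged into one kernel-verified Lean document; each statement's English description precedes it below -/
import Mathlib

section
/- Let f be a weighted homogeneous polynomial of type (d; w) with an isolated singularity at 0 (i.e., grad f vanishes only at 0 near 0). Then there exist C > 0 and a neighborhood U of 0 in ℂⁿ such that the weighted gradient norm ‖grad_w f(z)‖_w := (Σ_{i=1}^n |ρ(z)^{w_i} ∂f/∂z_i(z)|²)^{1/2} ≥ C · ρ(z)^d for all z ∈ U, where ρ(z) = (Σ_i |z_i|^{2/w_i})^{1/2}. -/
open MvPolynomial Filter

set_option maxHeartbeats 1000000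

/-- The weighted "norm" `ρ(z) = (∑ |zᵢ|^{2/wᵢ})^{1/2}`. -/
noncomputable def wrho (n : ℕ) (w : Fin n → ℕ) (z : Fin n → ℂ) : ℝ :=
  (∑ i, ‖z i‖ ^ ((2 : ℝ) / (w i : ℝ))) ^ ((1 : ℝ) / 2)

/-- The weighted gradient norm
`‖grad_w f(z)‖_w = (∑ᵢ |ρ(z)^{wᵢ} ∂f/∂zᵢ(z)|²)^{1/2}`. -/
noncomputable def wGradNorm (n : ℕ) (w : Fin n → ℕ)
    (f : MvPolynomial (Fin n) ℂ) (z : Fin n → ℂ) : ℝ :=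
  Real.sqrt (∑ i, (wrho n w z ^ (w i) * ‖eval z (pderiv i f)‖) ^ 2)

section Aux

variable {n : ℕ} {w : Fin n → ℕ} {d : ℕ}

/-- Scaling identity for the partial derivatives of a weighted homogeneous polynomial. -/
lemma pderiv_eval_scale {f : MvPolynomial (Fin n) ℂ}
    (hf : f.IsWeightedHomogeneous w d) (c : ℂ) (z : Fin n → ℂ) (j : Fin n) :
    c ^ (w j) * eval (fun i => c ^ (w i) * z i) (pderiv j f) =
      c ^ d * eval z (pderiv j f) := by
  conv_lhs => rw [f.as_sum]
  conv_rhs => rw [f.as_sum]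
  simp only [map_sum, Finset.mul_sum]
  refine Finset.sum_congr rfl fun m hm => ?_
  have hdeg : Finsupp.weight w m = d := hf (mem_support_iff.mp hm)
  rw [pderiv_monomial, eval_monomial, eval_monomial]
  by_cases hmj : m j = 0
  · simp [hmj]
  · set m' : Fin n →₀ ℕ := m - Finsupp.single j 1 with hm'def
    have hle : Finsupp.single j 1 ≤ m := Finsupp.single_le_iff.mpr (Nat.one_le_iff_ne_zero.mpr hmj)
    have hsum : m' + Finsupp.single j 1 = m := tsub_add_cancel_of_le hle
    have hwsingle : Finsupp.weight w (Finsupp.single j 1) = w j := by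
      rw [Finsupp.weight_apply, Finsupp.sum_single_index] <;> simp
    have hw' : Finsupp.weight w m' + w j = d := by
      have := congrArg (Finsupp.weight w) hsum
      rw [map_add, hwsingle, hdeg] at this
      exact this
    have hprod : (m'.prod fun i e => (c ^ w i * z i) ^ e) =
        c ^ (Finsupp.weight w m' : ℕ) * m'.prod fun i e => z i ^ e := by
      rw [Finsupp.prod, Finsupp.prod]
      have : ∀ i ∈ m'.support, (c ^ w i * z i) ^ m' i =
          c ^ (w i * m' i) * z i ^ m' i := by
        intro i _
        rw [mul_pow, ← pow_mul]
      rw [Finset.prod_congr rfl this, Finset.prod_mul_distrib, Finset.prod_pow_eq_pow_sum]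
      congr 2
      rw [Finsupp.weight_apply, Finsupp.sum]
      exact Finset.sum_congr rfl fun i _ => by rw [smul_eq_mul, mul_comm]
    rw [hprod]
    have hpow : c ^ (w j) * c ^ (Finsupp.weight w m' : ℕ) = c ^ d := by
      rw [← pow_add, add_comm, hw']
    ring_nf
    rw [← hpow]

variable (hw : ∀ i, 0 < w i)

lemma wrho_nonneg (z : Fin n → ℂ) : 0 ≤ wrho n w z :=
  Real.rpow_nonneg (Finset.sum_nonneg fun i _ => Real.rpow_nonneg (norm_nonneg _) _) _

include hw in
lemma wrho_scale (t : ℝ) (ht : 0 ≤ t) (z : Fin n → ℂ) :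
    wrho n w (fun i => (t : ℂ) ^ (w i) * z i) = t * wrho n w z := by
  unfold wrho
  have key : ∀ i : Fin n, ‖(t : ℂ) ^ (w i) * z i‖ ^ ((2:ℝ) / (w i : ℝ)) =
      t ^ (2:ℝ) * ‖z i‖ ^ ((2:ℝ) / (w i : ℝ)) := by
    intro i
    have hwi : (w i : ℝ) ≠ 0 := Nat.cast_ne_zero.mpr (hw i).ne'
    rw [norm_mul, norm_pow, Complex.norm_real, Real.norm_eq_abs, abs_of_nonneg ht,
      Real.mul_rpow (pow_nonneg ht _) (norm_nonneg _),
      ← Real.rpow_natCast t (w i), ← Real.rpow_mul ht]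
    congr 2
    field_simp
  rw [Finset.sum_congr rfl fun i _ => key i, ← Finset.mul_sum,
    Real.mul_rpow (Real.rpow_nonneg ht _)
      (Finset.sum_nonneg fun i _ => Real.rpow_nonneg (norm_nonneg _) _),
    ← Real.rpow_mul ht]
  norm_num

lemma wGradNorm_nonneg (f : MvPolynomial (Fin n) ℂ) (z : Fin n → ℂ) :
    0 ≤ wGradNorm n w f z := Real.sqrt_nonneg _

include hw in
lemma wGradNorm_scale {f : MvPolynomial (Fin n) ℂ}
    (hf : f.IsWeightedHomogeneous w d) (t : ℝ) (ht : 0 ≤ t) (z : Fin n → ℂ) :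
    wGradNorm n w f (fun i => (t : ℂ) ^ (w i) * z i) = t ^ d * wGradNorm n w f z := by
  unfold wGradNorm
  have key : ∀ i : Fin n,
      (wrho n w (fun i => (t : ℂ) ^ (w i) * z i) ^ (w i) *
        ‖eval (fun i => (t : ℂ) ^ (w i) * z i) (pderiv i f)‖) ^ 2 =
      (t ^ d) ^ 2 * (wrho n w z ^ (w i) * ‖eval z (pderiv i f)‖) ^ 2 := by
    intro i
    rw [wrho_scale hw t ht z, mul_pow t (wrho n w z) (w i)]
    have h1 : t ^ (w i) * ‖eval (fun i => (t : ℂ) ^ (w i) * z i) (pderiv i f)‖ =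
        ‖(t : ℂ) ^ (w i) * eval (fun i => (t : ℂ) ^ (w i) * z i) (pderiv i f)‖ := by
      rw [norm_mul, norm_pow, Complex.norm_real, Real.norm_eq_abs, abs_of_nonneg ht]
    calc (t ^ (w i) * wrho n w z ^ (w i) *
          ‖eval (fun i => (t : ℂ) ^ (w i) * z i) (pderiv i f)‖) ^ 2
        = (wrho n w z ^ (w i) *
            ‖(t : ℂ) ^ (w i) * eval (fun i => (t : ℂ) ^ (w i) * z i) (pderiv i f)‖) ^ 2 := by
          rw [← h1]; ring
      _ = (wrho n w z ^ (w i) * ‖(t : ℂ) ^ d * eval z (pderiv i f)‖) ^ 2 := by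
          rw [pderiv_eval_scale hf]
      _ = (t ^ d) ^ 2 * (wrho n w z ^ (w i) * ‖eval z (pderiv i f)‖) ^ 2 := by
          rw [norm_mul, norm_pow, Complex.norm_real, Real.norm_eq_abs, abs_of_nonneg ht]; ring
  rw [Finset.sum_congr rfl fun i _ => key i, ← Finset.mul_sum,
    Real.sqrt_mul (sq_nonneg _), Real.sqrt_sq (pow_nonneg ht d)]

omit hw in
lemma wrho_continuous : Continuous (wrho n w) := by
  unfold wrho
  refine Continuous.rpow_const ?_ fun x => Or.inr (by norm_num)
  refine continuous_finset_sum _ fun i _ => ?_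
  refine Continuous.rpow_const ((continuous_apply i).norm) fun x => Or.inr ?_
  positivity

omit hw in
lemma wGradNorm_continuous (f : MvPolynomial (Fin n) ℂ) :
    Continuous (wGradNorm n w f) := by
  unfold wGradNorm
  refine Real.continuous_sqrt.comp (continuous_finset_sum _ fun i _ => ?_)
  exact ((wrho_continuous.pow _).mul
    ((MvPolynomial.continuous_eval (pderiv i f)).norm)).pow 2

include hw in
lemma wrho_eq_zero {z : Fin n → ℂ} (h : wrho n w z = 0) : z = 0 := by
  unfold wrho at h
  have hsum : (∑ i, ‖z i‖ ^ ((2:ℝ) / (w i : ℝ))) = 0 := by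
    by_contra hne
    have hpos : 0 < ∑ i, ‖z i‖ ^ ((2:ℝ) / (w i : ℝ)) :=
      lt_of_le_of_ne (Finset.sum_nonneg fun i _ => Real.rpow_nonneg (norm_nonneg _) _)
        (Ne.symm hne)
    exact absurd h (ne_of_gt (Real.rpow_pos_of_pos hpos _))
  funext i
  have := (Finset.sum_eq_zero_iff_of_nonneg
    (fun i _ => Real.rpow_nonneg (norm_nonneg _) _)).mp hsum i (Finset.mem_univ i)
  have hwi : ((2:ℝ) / (w i : ℝ)) ≠ 0 := by
    have : (0:ℝ) < (w i : ℝ) := Nat.cast_pos.mpr (hw i)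
    positivity
  have hz : ‖z i‖ = 0 := (Real.rpow_eq_zero (norm_nonneg _) hwi).mp this
  simpa using hz

include hw in
lemma wrho_zero : wrho n w (0 : Fin n → ℂ) = 0 := by
  unfold wrho
  have : ∀ i : Fin n, ‖(0 : Fin n → ℂ) i‖ ^ ((2:ℝ) / (w i : ℝ)) = 0 := by
    intro i
    have hwi : (0:ℝ) < (w i : ℝ) := Nat.cast_pos.mpr (hw i)
    rw [Pi.zero_apply, norm_zero, Real.zero_rpow (by positivity)]
  rw [Finset.sum_congr rfl fun i _ => this i, Finset.sum_const, smul_zero,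
    Real.zero_rpow (by norm_num)]

end Aux

/-- **Lower bound for the weighted gradient of a weighted homogeneous
isolated singularity**: `‖grad_w f(z)‖_w ≥ C · ρ(z)^d` near `0`. -/
theorem wGradNorm_lower_bound (n : ℕ) (w : Fin n → ℕ) (d : ℕ)
    (hw : ∀ i, 0 < w i) (hd : 0 < d)
    (f : MvPolynomial (Fin n) ℂ)
    (hf : f.IsWeightedHomogeneous w d)
    (hiso : ∀ᶠ z in nhds (0 : Fin n → ℂ),
      (∀ i, eval z (pderiv i f) = 0) → z = 0) :
    ∃ C > (0 : ℝ), ∀ᶠ z in nhds (0 : Fin n → ℂ),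
      C * wrho n w z ^ d ≤ wGradNorm n w f z := by
  rcases isEmpty_or_nonempty (Fin n) with he | hne
  · refine ⟨1, one_pos, Eventually.of_forall fun z => ?_⟩
    have hz : wrho n w z = 0 := by
      unfold wrho
      rw [Finset.univ_eq_empty, Finset.sum_empty, Real.zero_rpow (by norm_num)]
    rw [hz, zero_pow hd.ne', mul_zero]
    exact wGradNorm_nonneg f z
  · set S : Set (Fin n → ℂ) := {z | wrho n w z = 1} with hSdef
    have hterm : ∀ z ∈ S, ∀ i, ‖z i‖ ≤ 1 := by
      intro z hz i
      by_contra hlt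
      push_neg at hlt
      have hq : (0:ℝ) < (2:ℝ) / (w i : ℝ) := by
        have : (0:ℝ) < (w i : ℝ) := Nat.cast_pos.mpr (hw i)
        positivity
      have h1 : (1:ℝ) < ‖z i‖ ^ ((2:ℝ) / (w i : ℝ)) :=
        (Real.one_lt_rpow_iff_of_pos (lt_trans one_pos hlt)).mpr (Or.inl ⟨hlt, hq⟩)
      have h2 : (1:ℝ) < ∑ j, ‖z j‖ ^ ((2:ℝ) / (w j : ℝ)) :=
        lt_of_lt_of_le h1 (Finset.single_le_sum
          (f := fun j => ‖z j‖ ^ ((2:ℝ) / (w j : ℝ)))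
          (fun j _ => Real.rpow_nonneg (norm_nonneg _) _) (Finset.mem_univ i))
      have h3 : (1:ℝ) < (∑ j, ‖z j‖ ^ ((2:ℝ) / (w j : ℝ))) ^ ((1:ℝ)/2) :=
        (Real.one_lt_rpow_iff_of_pos (lt_trans one_pos h2)).mpr (Or.inl ⟨h2, by norm_num⟩)
      have hz1 : wrho n w z = 1 := hz
      unfold wrho at hz1
      rw [hz1] at h3
      exact lt_irrefl 1 h3
    have hclosed : IsClosed S := isClosed_eq wrho_continuous continuous_const
    have hbdd : Bornology.IsBounded S := by
      refine (Metric.isBounded_closedBall (x := (0 : Fin n → ℂ)) (r := 1)).subset ?_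
      intro z hz
      rw [Metric.mem_closedBall, dist_zero_right]
      exact (pi_norm_le_iff_of_nonneg zero_le_one).mpr (hterm z hz)
    have hcomp : IsCompact S := Metric.isCompact_of_isClosed_isBounded hclosed hbdd
    have hSne : S.Nonempty := by
      obtain ⟨j⟩ := hne
      refine ⟨(fun i => if i = j then (1:ℂ) else 0), ?_⟩
      show wrho n w (fun i => if i = j then (1:ℂ) else 0) = 1
      unfold wrho
      have : ∀ i : Fin n, ‖if i = j then (1:ℂ) else 0‖ ^ ((2:ℝ) / (w i : ℝ)) =
          if i = j then 1 else 0 := by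
        intro i
        by_cases hij : i = j
        · rw [if_pos hij, if_pos hij, norm_one, Real.one_rpow]
        · have hwi : (0:ℝ) < (w i : ℝ) := Nat.cast_pos.mpr (hw i)
          rw [if_neg hij, norm_zero, Real.zero_rpow (by positivity), if_neg hij]
      rw [Finset.sum_congr rfl fun i _ => this i, Finset.sum_ite_eq' _ j,
        if_pos (Finset.mem_univ j), Real.one_rpow]
    obtain ⟨u, huS, hmin⟩ := hcomp.exists_isMinOn hSne (wGradNorm_continuous (w := w) f).continuousOn
    have huS1 : wrho n w u = 1 := huS
    have hCpos : 0 < wGradNorm n w f u := by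
      rcases (wGradNorm_nonneg f u).lt_or_eq with h | h
      · exact h
      · exfalso
        have h0 : wGradNorm n w f u = 0 := h.symm
        unfold wGradNorm at h0
        have hsum0 : (∑ i, (wrho n w u ^ (w i) * ‖eval u (pderiv i f)‖) ^ 2) = 0 := by
          have hnn : 0 ≤ ∑ i, (wrho n w u ^ (w i) * ‖eval u (pderiv i f)‖) ^ 2 :=
            Finset.sum_nonneg fun i _ => sq_nonneg _
          exact le_antisymm (Real.sqrt_eq_zero'.mp h0) hnn
        have hgrad : ∀ i, eval u (pderiv i f) = 0 := by
          intro i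
          have := (Finset.sum_eq_zero_iff_of_nonneg
            (fun i _ => sq_nonneg _)).mp hsum0 i (Finset.mem_univ i)
          have h2 := pow_eq_zero_iff (n := 2) (by norm_num) |>.mp this
          rw [huS1, one_pow, one_mul] at h2
          exact norm_eq_zero.mp h2
        rw [Metric.eventually_nhds_iff] at hiso
        obtain ⟨ε, hε, hball⟩ := hiso
        set t : ℝ := min (ε/2) (1/2) with htdef
        have ht0 : 0 < t := lt_min (by linarith) (by norm_num)
        have ht1 : t ≤ 1 := le_trans (min_le_right _ _) (by norm_num)
        have htε : t < ε := lt_of_le_of_lt (min_le_left _ _) (by linarith)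
        set v : Fin n → ℂ := fun i => (t : ℂ) ^ (w i) * u i with hvdef
        have hgv : ∀ j, eval v (pderiv j f) = 0 := by
          intro j
          have hkey := pderiv_eval_scale hf (t : ℂ) u j
          rw [hgrad j, mul_zero] at hkey
          have htc : ((t : ℂ)) ^ (w j) ≠ 0 :=
            pow_ne_zero _ (by exact_mod_cast ht0.ne')
          exact (mul_eq_zero.mp hkey).resolve_left htc
        have hvnorm : dist v 0 < ε := by
          rw [dist_zero_right]
          refine lt_of_le_of_lt ((pi_norm_le_iff_of_nonneg ht0.le).mpr fun i => ?_) htε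
          have h1 : ‖v i‖ = t ^ (w i) * ‖u i‖ := by
            rw [hvdef]
            simp only [norm_mul, norm_pow, Complex.norm_real, Real.norm_eq_abs,
              abs_of_nonneg ht0.le]
          rw [h1]
          calc t ^ (w i) * ‖u i‖ ≤ t ^ (w i) * 1 :=
                mul_le_mul_of_nonneg_left (hterm u huS i) (pow_nonneg ht0.le _)
            _ = t ^ (w i) := mul_one _
            _ ≤ t ^ 1 := pow_le_pow_of_le_one ht0.le ht1 (hw i)
            _ = t := pow_one t
        have hv0 : v = 0 := hball hvnorm hgv
        have hu0 : u = 0 := by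
          funext i
          have := congrFun hv0 i
          rw [hvdef] at this
          have htc : ((t : ℂ)) ^ (w i) ≠ 0 := pow_ne_zero _ (by exact_mod_cast ht0.ne')
          exact (mul_eq_zero.mp this).resolve_left htc
        rw [hu0, wrho_zero hw] at huS1
        exact one_ne_zero huS1.symm
    refine ⟨wGradNorm n w f u, hCpos, Eventually.of_forall fun z => ?_⟩
    rcases (wrho_nonneg (w := w) z).lt_or_eq with hr | hr
    · set r : ℝ := wrho n w z with hrdef
      have hrc : ((r : ℂ)) ≠ 0 := by exact_mod_cast hr.ne'
      set v : Fin n → ℂ := fun i => z i / (r : ℂ) ^ (w i) with hvdef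
      have hz_eq : z = fun i => (r : ℂ) ^ (w i) * v i := by
        funext i
        rw [hvdef]
        field_simp
      have hvS : wrho n w v = 1 := by
        have hs := wrho_scale hw r hr.le v
        rw [← hz_eq] at hs
        have h1 : r * 1 = r * wrho n w v := by rw [mul_one]; exact hs
        exact (mul_left_cancel₀ hr.ne' h1).symm
      have h1 : wGradNorm n w f z = r ^ d * wGradNorm n w f v := by
        conv_lhs => rw [hz_eq]
        exact wGradNorm_scale hw hf r hr.le v
      rw [h1, mul_comm]
      exact mul_le_mul_of_nonneg_left (isMinOn_iff.mp hmin v hvS) (pow_nonneg hr.le d)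
    · rw [← hr, zero_pow hd.ne', mul_zero]
      exact wGradNorm_nonneg f z
end

section
/- Let f be weighted homogeneous of type (d; w) with isolated singularity at 0 and suppose d ≥ 2 w_i for all i. Then there exist C > 0 and a neighborhood of 0 such that ‖grad f(z)‖ ≥ C · ‖z‖^{max_i (d/w_i - 1)} near 0; in particular the Łojasiewicz exponent satisfies L(f) ≤ max_{i=1}^n (d/w_i − 1). -/
open MvPolynomial Filter

lemma eval_scale {m : ℕ} {w : Fin m → ℕ} {D : ℕ} {p : MvPolynomial (Fin m) ℂ}
    (hp : p.IsWeightedHomogeneous w D) (c : ℂ) (z : Fin m → ℂ) :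
    eval (fun i => c ^ w i * z i) p = c ^ D * eval z p := by
  conv_lhs => rw [p.as_sum]
  conv_rhs => rw [p.as_sum]
  rw [map_sum, map_sum, Finset.mul_sum]
  refine Finset.sum_congr rfl fun v hv => ?_
  have hwv : Finsupp.weight w v = D := hp (mem_support_iff.mp hv)
  rw [eval_monomial, eval_monomial]
  have key : (v.prod fun i k => (c ^ w i * z i) ^ k)
      = c ^ D * v.prod fun i k => z i ^ k := by
    rw [Finsupp.prod, Finsupp.prod]
    simp_rw [mul_pow]
    rw [Finset.prod_mul_distrib]
    congr 1
    simp_rw [← pow_mul]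
    rw [Finset.prod_pow_eq_pow_sum]
    congr 1
    rw [← hwv, Finsupp.weight_apply, Finsupp.sum]
    exact Finset.sum_congr rfl fun i _ => by simp [mul_comm]
  rw [key]; ring

lemma pderiv_isWeightedHomogeneous {m : ℕ} {w : Fin m → ℕ} {D : ℕ}
    {p : MvPolynomial (Fin m) ℂ} (hp : p.IsWeightedHomogeneous w D) (i : Fin m) :
    (pderiv i p).IsWeightedHomogeneous w (D - w i) := by
  have h : pderiv i p
      = ∑ v ∈ p.support, monomial (v - Finsupp.single i 1) (coeff v p * v i) := by
    conv_lhs => rw [p.as_sum]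
    rw [map_sum]
    simp_rw [pderiv_monomial]
  rw [h]
  apply IsWeightedHomogeneous.sum
  intro v hv
  rcases Nat.eq_zero_or_pos (v i) with h0 | h0
  · rw [h0]
    norm_num
    exact isWeightedHomogeneous_zero _ _ _
  · apply isWeightedHomogeneous_monomial
    have hv' : Finsupp.weight w v = D := hp (mem_support_iff.mp hv)
    have hsub : (v - Finsupp.single i 1) + Finsupp.single i 1 = v := by
      ext j
      simp only [Finsupp.add_apply, Finsupp.sub_apply, Finsupp.single_apply]
      rcases eq_or_ne i j with rfl | hne
      · simp; omega
      · simp [hne]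
    have h2 := congrArg (Finsupp.weight w) hsub
    rw [map_add] at h2
    have hws : Finsupp.weight w (Finsupp.single i 1) = w i := by
      rw [Finsupp.weight_apply, Finsupp.sum_single_index] <;> simp
    rw [hws, hv'] at h2
    omega


/-- Euclidean norm on `ℂⁿ`. -/
noncomputable def eNorm (n : ℕ) (z : Fin n → ℂ) : ℝ :=
  Real.sqrt (∑ i, ‖z i‖ ^ 2)

/-- The Łojasiewicz exponent defined as
`inf {λ > 0 : ‖grad f‖ ≥ c ‖z‖^λ near 0}`. -/
noncomputable def lojInf (n : ℕ) (f : MvPolynomial (Fin n) ℂ) : ℝ :=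
  sInf {l : ℝ | 0 < l ∧ ∃ c > (0 : ℝ), ∀ᶠ z in nhds (0 : Fin n → ℂ),
    c * eNorm n z ^ l ≤ eNorm n (fun i => eval z (pderiv i f))}

set_option maxHeartbeats 1000000 in
/-- For a weighted homogeneous isolated singularity of type `(d; w)` with
`d ≥ 2wᵢ`, one has `‖grad f(z)‖ ≥ C‖z‖^{maxᵢ(d/wᵢ − 1)}` near `0`; in
particular `L(f) ≤ maxᵢ (d/wᵢ − 1)`. -/
theorem loj_upper_bound_weighted_homogeneous (n : ℕ) (w : Fin (n + 1) → ℕ) (d : ℕ)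
    (hw : ∀ i, 0 < w i) (hd : ∀ i, 2 * w i ≤ d)
    (f : MvPolynomial (Fin (n + 1)) ℂ)
    (hf : f.IsWeightedHomogeneous w d)
    (hiso : ∀ᶠ z in nhds (0 : Fin (n + 1) → ℂ),
      (∀ i, eval z (pderiv i f) = 0) → z = 0) :
    (∃ C > (0 : ℝ), ∀ᶠ z in nhds (0 : Fin (n + 1) → ℂ),
      C * eNorm (n + 1) z ^
          (Finset.univ.sup' Finset.univ_nonempty fun i => (d : ℝ) / (w i) - 1)
        ≤ eNorm (n + 1) (fun i => eval z (pderiv i f))) ∧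
    lojInf (n + 1) f ≤
      Finset.univ.sup' Finset.univ_nonempty fun i => (d : ℝ) / (w i) - 1 := by
  classical
  -- setup
  set M : ℕ := ∏ i, w i with hMdef
  have hMw : ∀ i, w i ∣ M := fun i => Finset.dvd_prod_of_mem w (Finset.mem_univ i)
  have hM : 0 < M := Finset.prod_pos fun i _ => hw i
  set k : Fin (n + 1) → ℕ := fun i => 2 * (M / w i) with hkdef
  have hk : ∀ i, w i * k i = 2 * M := by
    intro i
    have h1 := Nat.mul_div_cancel' (hMw i)
    simp only [hkdef]
    rw [show w i * (2 * (M / w i)) = 2 * (w i * (M / w i)) by ring, h1]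
  have hkpos : ∀ i, 0 < k i := by
    intro i
    have h1 := Nat.le_of_dvd hM (hMw i)
    have := Nat.one_le_div_iff (hw i) |>.mpr h1
    simp only [hkdef]; omega
  set ρ : (Fin (n + 1) → ℂ) → ℝ := fun z => ∑ i, ‖z i‖ ^ k i with hρdef
  have hρcont : Continuous ρ :=
    continuous_finset_sum _ fun i _ => ((continuous_apply i).norm).pow _
  have hρnn : ∀ z, 0 ≤ ρ z := fun z =>
    Finset.sum_nonneg fun i _ => pow_nonneg (norm_nonneg _) _
  have hρzero : ρ 0 = 0 := by
    simp only [hρdef, Pi.zero_apply, norm_zero]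
    exact Finset.sum_eq_zero fun i _ => zero_pow (hkpos i).ne'
  have hρeq0 : ∀ z, ρ z = 0 → z = 0 := by
    intro z hz
    funext i
    have h1 : ∀ j ∈ Finset.univ, (0:ℝ) ≤ ‖z j‖ ^ k j := fun j _ => pow_nonneg (norm_nonneg _) _
    have h2 := (Finset.sum_eq_zero_iff_of_nonneg h1).mp hz i (Finset.mem_univ i)
    have := pow_eq_zero_iff (hkpos i).ne' |>.mp h2
    simpa using this
  have hρscale : ∀ (t : ℝ), 0 ≤ t → ∀ z,
      ρ (fun i => ((t:ℂ)) ^ w i * z i) = t ^ (2 * M) * ρ z := by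
    intro t ht z
    simp only [hρdef]
    rw [Finset.mul_sum]
    refine Finset.sum_congr rfl fun i _ => ?_
    rw [norm_mul, norm_pow, Complex.norm_real, Real.norm_eq_abs, abs_of_nonneg ht,
      mul_pow, ← pow_mul, hk i]
  -- gradient scaling
  have hscale : ∀ (t : ℝ) (i : Fin (n+1)) (z : Fin (n+1) → ℂ),
      eval (fun j => ((t:ℂ)) ^ w j * z j) (pderiv i f)
        = (t:ℂ) ^ (d - w i) * eval z (pderiv i f) :=
    fun t i z => eval_scale (pderiv_isWeightedHomogeneous hf i) _ _
  -- the weighted sphere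
  set S : Set (Fin (n+1) → ℂ) := {u | ρ u = 1} with hSdef
  have hu_le_one : ∀ u ∈ S, ∀ i, ‖u i‖ ≤ 1 := by
    intro u hu i
    by_contra hgt
    push_neg at hgt
    have h1 : (1:ℝ) < ‖u i‖ ^ k i := one_lt_pow₀ hgt (hkpos i).ne'
    have h2 : ‖u i‖ ^ k i ≤ ρ u :=
      Finset.single_le_sum (fun j _ => pow_nonneg (norm_nonneg _) _) (Finset.mem_univ i)
    rw [hu] at h2
    linarith
  have hScompact : IsCompact S := by
    apply Metric.isCompact_of_isClosed_isBounded
    · exact isClosed_eq hρcont continuous_const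
    · apply Bornology.IsBounded.subset (Metric.isBounded_closedBall (x := (0 : Fin (n+1) → ℂ)) (r := 1))
      intro u hu
      rw [Metric.mem_closedBall, dist_zero_right]
      exact pi_norm_le_iff_of_nonneg zero_le_one |>.mpr (hu_le_one u hu)
  have hSne : S.Nonempty := by
    refine ⟨fun i => if i = 0 then 1 else 0, ?_⟩
    show ρ _ = 1
    simp only [hρdef]
    rw [Finset.sum_eq_single 0]
    · simp
    · intro i _ hi
      simp [hi, zero_pow (hkpos i).ne']
    · simp
  -- minimum of the gradient norm on S
  set g : (Fin (n+1) → ℂ) → ℝ := fun z => eNorm (n+1) (fun i => eval z (pderiv i f)) with hgdef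
  have hgnn : ∀ z, 0 ≤ g z := fun z => Real.sqrt_nonneg _
  have hgcont : Continuous g := by
    apply Real.continuous_sqrt.comp
    exact continuous_finset_sum _ fun i _ =>
      ((MvPolynomial.continuous_eval (p := pderiv i f)).norm).pow 2
  have hgpos : ∀ u ∈ S, 0 < g u := by
    intro u hu
    rcases (hgnn u).lt_or_eq with h | h
    · exact h
    exfalso
    -- g u = 0 ⇒ all partials vanish at u
    have hsumnn : ∀ i ∈ Finset.univ, (0:ℝ) ≤ ‖eval u (pderiv i f)‖ ^ 2 :=
      fun i _ => sq_nonneg _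
    have hsum : ∑ i, ‖eval u (pderiv i f)‖ ^ 2 = 0 := by
      have h0 : Real.sqrt (∑ i, ‖eval u (pderiv i f)‖ ^ 2) = 0 := h.symm
      nlinarith [Real.sq_sqrt (Finset.sum_nonneg hsumnn), Finset.sum_nonneg hsumnn]
    have hvanish : ∀ i, eval u (pderiv i f) = 0 := by
      intro i
      have := (Finset.sum_eq_zero_iff_of_nonneg hsumnn).mp hsum i (Finset.mem_univ i)
      have := pow_eq_zero_iff (two_ne_zero) |>.mp this
      simpa using this
    -- scale u towards 0 to contradict hiso
    rw [Metric.eventually_nhds_iff_ball] at hiso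
    obtain ⟨ε, hε, hball⟩ := hiso
    set t : ℝ := min (ε / 2) (1 / 2) with htdef
    have ht0 : 0 < t := lt_min (by linarith) (by norm_num)
    have ht1 : t ≤ 1 := le_trans (min_le_right _ _) (by norm_num)
    have htε : t < ε := lt_of_le_of_lt (min_le_left _ _) (by linarith)
    set v : Fin (n+1) → ℂ := fun i => ((t:ℂ)) ^ w i * u i with hvdef
    have hvnorm : ‖v‖ < ε := by
      have : ∀ i, ‖v i‖ ≤ t := by
        intro i
        simp only [hvdef]
        rw [norm_mul, norm_pow, Complex.norm_real, Real.norm_eq_abs, abs_of_nonneg ht0.le]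
        calc t ^ w i * ‖u i‖ ≤ t ^ w i * 1 := by
              exact mul_le_mul_of_nonneg_left (hu_le_one u hu i) (pow_nonneg ht0.le _)
          _ = t ^ w i := mul_one _
          _ ≤ t ^ 1 := pow_le_pow_of_le_one ht0.le ht1 (hw i)
          _ = t := pow_one _
      calc ‖v‖ ≤ t := pi_norm_le_iff_of_nonneg ht0.le |>.mpr this
        _ < ε := htε
    have hvzero : v = 0 := by
      apply hball v (by rwa [Metric.mem_ball, dist_zero_right])
      intro i
      rw [hvdef, hscale t i u, hvanish i, mul_zero]
    have : u = 0 := by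
      funext i
      have := congrFun hvzero i
      simp only [hvdef, Pi.zero_apply, mul_eq_zero] at this
      rcases this with h' | h'
      · exfalso
        have : (t:ℂ) ≠ 0 := by exact_mod_cast ht0.ne'
        exact this (pow_eq_zero_iff (hw i).ne' |>.mp h')
      · exact h'
    rw [this] at hu
    simp only [hSdef, Set.mem_setOf_eq, hρzero] at hu
    exact zero_ne_one hu
  obtain ⟨u0, hu0S, hmin⟩ := hScompact.exists_isMinOn hSne hgcont.continuousOn
  set m0 : ℝ := g u0 with hm0def
  have hm0 : 0 < m0 := hgpos u0 hu0S
  -- minimal weight index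
  obtain ⟨j, -, hj⟩ := Finset.exists_min_image Finset.univ w Finset.univ_nonempty
  have hwj : ∀ i, w j ≤ w i := fun i => hj i (Finset.mem_univ i)
  have hwjpos : (0:ℝ) < w j := by exact_mod_cast hw j
  set lam : ℝ := Finset.univ.sup' Finset.univ_nonempty (fun i => (d : ℝ) / (w i) - 1) with hlamdef
  have hlam : lam = (d:ℝ) / w j - 1 := by
    apply le_antisymm
    · apply Finset.sup'_le
      intro i _
      have h1 : (d:ℝ) / w i ≤ (d:ℝ) / w j := by
        apply div_le_div_of_nonneg_left (by positivity) hwjpos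
        exact_mod_cast hwj i
      linarith
    · exact Finset.le_sup' (fun i => (d : ℝ) / (w i) - 1) (Finset.mem_univ j)
  have hlam1 : 1 ≤ lam := by
    rw [hlam]
    have h2 : (2:ℝ) ≤ (d:ℝ) / w j := by
      rw [le_div_iff₀ hwjpos]
      exact_mod_cast (by linarith [hd j] : (2 * w j : ℕ) ≤ (d:ℕ))
    linarith
  have hwjd : w j ≤ d := by have := hd j; omega
  set A : ℝ := Real.sqrt (n+1) ^ lam with hAdef
  have hA : 0 < A := Real.rpow_pos_of_pos (Real.sqrt_pos.mpr (by positivity)) _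
  set C : ℝ := m0 / A with hCdef
  have hC : 0 < C := div_pos hm0 hA
  have hmain : ∀ z, ρ z < 1 →
      C * eNorm (n+1) z ^ lam ≤ eNorm (n+1) (fun i => eval z (pderiv i f)) := by
    intro z hz
    rcases eq_or_ne z 0 with rfl | hz0
    · have h0 : eNorm (n+1) (0 : Fin (n+1) → ℂ) = 0 := by simp [eNorm]
      rw [h0, Real.zero_rpow (by linarith), mul_zero]
      exact Real.sqrt_nonneg _
    · have hρpos : 0 < ρ z := lt_of_le_of_ne (hρnn z) (fun h => hz0 (hρeq0 z h.symm))
      set t : ℝ := ρ z ^ (((2 * M : ℕ):ℝ))⁻¹ with htdef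
      have h2M : ((2 * M : ℕ):ℝ) ≠ 0 := Nat.cast_ne_zero.mpr (by omega)
      have ht0 : 0 < t := Real.rpow_pos_of_pos hρpos _
      have ht2M : t ^ (2 * M) = ρ z := by
        rw [htdef, ← Real.rpow_natCast (ρ z ^ _) (2*M), ← Real.rpow_mul (hρnn z),
          inv_mul_cancel₀ h2M, Real.rpow_one]
      have ht1 : t < 1 := by
        apply Real.rpow_lt_one (hρnn z) hz
        rw [inv_pos]
        exact lt_of_le_of_ne (Nat.cast_nonneg _) (Ne.symm h2M)
      set u : Fin (n+1) → ℂ := fun i => z i / (t:ℂ) ^ w i with hudef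
      have htC : (t:ℂ) ≠ 0 := by exact_mod_cast ht0.ne'
      have hzu : ∀ i, z i = (t:ℂ) ^ w i * u i := by
        intro i; rw [hudef]; field_simp
      have hρu : ρ u = 1 := by
        have h1 := hρscale t ht0.le u
        have h2 : ρ z = t ^ (2*M) * ρ u := by
          rw [← h1]; congr 1; funext i; exact hzu i
        rw [ht2M] at h2
        have h3 : ρ z * 1 = ρ z * ρ u := by linarith
        have := mul_left_cancel₀ hρpos.ne' h3
        linarith
      have huS : u ∈ S := hρu
      have hgrad_i : ∀ i, ‖eval z (pderiv i f)‖
          = t ^ (d - w i) * ‖eval u (pderiv i f)‖ := by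
        intro i
        have h1 : eval z (pderiv i f) = (t:ℂ) ^ (d - w i) * eval u (pderiv i f) := by
          have h2 := hscale t i u
          rw [show (fun j => (t:ℂ) ^ w j * u j) = z from funext fun j => (hzu j).symm] at h2
          exact h2
        rw [h1, norm_mul, norm_pow, Complex.norm_real, Real.norm_eq_abs, abs_of_nonneg ht0.le]
      have hgradlb : t ^ (d - w j) * m0 ≤ eNorm (n+1) (fun i => eval z (pderiv i f)) := by
        have hum : m0 ≤ g u := hmin huS
        have key : (t ^ (d - w j) * g u) ^ 2 ≤ ∑ i, ‖eval z (pderiv i f)‖ ^ 2 := by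
          have hsumnn : (0:ℝ) ≤ ∑ i, ‖eval u (pderiv i f)‖ ^ 2 :=
            Finset.sum_nonneg fun i _ => sq_nonneg _
          rw [mul_pow]
          have hgu2 : g u ^ 2 = ∑ i, ‖eval u (pderiv i f)‖ ^ 2 := by
            rw [hgdef]; exact Real.sq_sqrt hsumnn
          rw [hgu2, Finset.mul_sum]
          apply Finset.sum_le_sum
          intro i _
          rw [hgrad_i i, mul_pow]
          apply mul_le_mul_of_nonneg_right _ (sq_nonneg _)
          apply pow_le_pow_left₀ (pow_nonneg ht0.le _)
          exact pow_le_pow_of_le_one ht0.le ht1.le (by have := hwj i; omega)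
        have hnn : 0 ≤ t ^ (d - w j) * g u := mul_nonneg (pow_nonneg ht0.le _) (hgnn u)
        calc t ^ (d - w j) * m0 ≤ t ^ (d - w j) * g u :=
              mul_le_mul_of_nonneg_left hum (pow_nonneg ht0.le _)
          _ = Real.sqrt ((t ^ (d - w j) * g u) ^ 2) := (Real.sqrt_sq hnn).symm
          _ ≤ eNorm (n+1) (fun i => eval z (pderiv i f)) := Real.sqrt_le_sqrt key
      have hzbound : eNorm (n+1) z ≤ Real.sqrt (n+1) * t ^ (w j) := by
        have key : ∑ i, ‖z i‖ ^ 2 ≤ (n+1) * (t ^ w j) ^ 2 := by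
          calc ∑ i, ‖z i‖ ^ 2 ≤ ∑ _i : Fin (n+1), (t ^ w j) ^ 2 := by
                apply Finset.sum_le_sum
                intro i _
                have h1 : ‖z i‖ ≤ t ^ w j := by
                  rw [hzu i, norm_mul, norm_pow, Complex.norm_real, Real.norm_eq_abs,
                    abs_of_nonneg ht0.le]
                  calc t ^ w i * ‖u i‖ ≤ t ^ w i * 1 :=
                        mul_le_mul_of_nonneg_left (hu_le_one u huS i) (pow_nonneg ht0.le _)
                    _ = t ^ w i := mul_one _
                    _ ≤ t ^ w j := pow_le_pow_of_le_one ht0.le ht1.le (hwj i)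
                exact pow_le_pow_left₀ (norm_nonneg _) h1 2
            _ = (n+1) * (t ^ w j) ^ 2 := by
                rw [Finset.sum_const, Finset.card_univ, Fintype.card_fin, nsmul_eq_mul]
                push_cast; ring
        show Real.sqrt (∑ i, ‖z i‖ ^ 2) ≤ _
        calc Real.sqrt (∑ i, ‖z i‖ ^ 2) ≤ Real.sqrt ((n+1) * (t ^ w j) ^ 2) :=
              Real.sqrt_le_sqrt key
          _ = Real.sqrt (n+1) * t ^ w j := by
              rw [Real.sqrt_mul (by positivity : (0:ℝ) ≤ (n:ℝ)+1), Real.sqrt_sq (pow_nonneg ht0.le _)]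
      have hrpow : eNorm (n+1) z ^ lam ≤ A * t ^ (d - w j) := by
        have h1 : eNorm (n+1) z ^ lam ≤ (Real.sqrt (n+1) * t ^ w j) ^ lam :=
          Real.rpow_le_rpow (Real.sqrt_nonneg _) hzbound (by linarith)
        have h2 : (Real.sqrt (n+1) * t ^ w j : ℝ) ^ lam = A * (t ^ w j : ℝ) ^ lam :=
          Real.mul_rpow (Real.sqrt_nonneg _) (pow_nonneg ht0.le _)
        have h3 : (t ^ w j : ℝ) ^ lam = t ^ (((d - w j : ℕ)):ℝ) := by
          rw [← Real.rpow_natCast t (w j), ← Real.rpow_mul ht0.le]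
          congr 1
          rw [hlam, Nat.cast_sub hwjd]
          field_simp
        have h4 : t ^ (((d - w j : ℕ)):ℝ) = t ^ (d - w j) := Real.rpow_natCast t _
        rw [h2, h3, h4] at h1
        exact h1
      calc C * eNorm (n+1) z ^ lam ≤ C * (A * t ^ (d - w j)) :=
            mul_le_mul_of_nonneg_left hrpow hC.le
        _ = t ^ (d - w j) * m0 := by rw [hCdef]; field_simp
        _ ≤ _ := hgradlb
  have hEv : ∀ᶠ z in nhds (0 : Fin (n+1) → ℂ),
      C * eNorm (n+1) z ^ lam ≤ eNorm (n+1) (fun i => eval z (pderiv i f)) := by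
    have hopen : IsOpen {z : Fin (n+1) → ℂ | ρ z < 1} := isOpen_lt hρcont continuous_const
    have h0 : (0 : Fin (n+1) → ℂ) ∈ {z | ρ z < 1} := by
      simp only [Set.mem_setOf_eq, hρzero]; norm_num
    filter_upwards [hopen.mem_nhds h0] with z hz using hmain z hz
  refine ⟨⟨C, hC, hEv⟩, ?_⟩
  rw [lojInf]
  apply csInf_le ⟨0, fun l hl => hl.1.le⟩
  exact ⟨by linarith, C, hC, hEv⟩
end

section
/- Let f be weighted homogeneous of type (d; w) with d ≥ 2w_i for all i, and suppose monomials z_1 z_i (some i) and z_n^{q_n} z_j both appear in f, where w_1 = min w and w_n = max w. Then q_n = 1 and w_1 = w_2 = ... = w_n (f is in fact homogeneous). -/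
/-- Case 1a of the main theorem: if `d ≥ 2wᵢ` for all `i`, `d = w₁ + wᵢ`
(the monomial `z₁ zᵢ` appears) and `d = qₙ wₙ + w_j` with `j ≠ n`
(the monomial `zₙ^{qₙ} z_j` appears), where `w₁ ≤ … ≤ wₙ`, then `qₙ = 1`
and all the weights are equal. -/
theorem case_mixed_monomial (n : ℕ) (w : Fin (n + 1) → ℕ) (d qₙ : ℕ)
    (hw : ∀ i, 0 < w i) (hmono : Monotone w)
    (hd : ∀ i, 2 * w i ≤ d)
    (hq : 1 ≤ qₙ)
    (i : Fin (n + 1)) (hi : d = w 0 + w i)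
    (j : Fin (n + 1)) (hj : j ≠ Fin.last n)
    (hjq : d = qₙ * w (Fin.last n) + w j) :
    qₙ = 1 ∧ ∀ k, w k = w 0 := by
  have h0j : w 0 ≤ w j := hmono (Fin.zero_le j)
  have hin : w i ≤ w (Fin.last n) := hmono (Fin.le_last i)
  have h0n : w 0 ≤ w (Fin.last n) := hmono (Fin.zero_le _)
  have hwj := hw j
  have hwn := hw (Fin.last n)
  have hdn := hd (Fin.last n)
  have hq1 : qₙ = 1 := by
    by_contra h
    have h2 : 2 ≤ qₙ := by omega
    have : 2 * w (Fin.last n) ≤ qₙ * w (Fin.last n) :=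
      Nat.mul_le_mul_right _ h2
    omega
  subst hq1
  refine ⟨rfl, fun k => ?_⟩
  have h0k : w 0 ≤ w k := hmono (Fin.zero_le k)
  have hkn : w k ≤ w (Fin.last n) := hmono (Fin.le_last k)
  omega
end

section
/- The polynomial f(z) = z_1 z_4 + z_1^{10} + z_2^5 + z_3^5 has Łojasiewicz exponent L(f) = 4, which is strictly less than min(max_i (d/w_i − 1), μ(f)) = min(10, 16) = 10 for its weighted homogeneous type (10; 1,2,2,9). Hence the Krasiński–Oleksik–Płoski formula fails in 4 variables. -/
open MvPolynomial Filter

/-- The order of a tuple of power series: the minimum of the orders of the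
components. -/
noncomputable def tupleOrder {m : ℕ} (ψ : Fin m → PowerSeries ℂ) : ℕ∞ :=
  ⨅ i, PowerSeries.order (ψ i)

/-- The set of ratios `ord(grad f ∘ φ) / ord(φ)` over all nonzero analytic
paths `φ` with `φ(0) = 0`; the Łojasiewicz exponent `L(f)` is its supremum
(Lejeune–Teissier). -/
noncomputable def lojPathSet (n : ℕ) (f : MvPolynomial (Fin n) ℂ) : Set ℝ :=
  {r : ℝ | ∃ φ : Fin n → PowerSeries ℂ, φ ≠ 0 ∧
    (∀ i, PowerSeries.constantCoeff (φ i) = 0) ∧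
    ∃ a b : ℕ, 0 < b ∧ tupleOrder φ = (b : ℕ∞) ∧
      tupleOrder (fun i => aeval φ (pderiv i f)) = (a : ℕ∞) ∧
      r = (a : ℝ) / (b : ℝ)}

/-!
Along a path `φ` the gradient of `f` is `(φ₃ + 10φ₀⁹, 5φ₁⁴, 5φ₂⁴, φ₀)`. If `φ` has order `b ≥ 1`,
attained by the component `φⱼ`, then some gradient component has order at most `4b`: the last one
if `j = 0`, the `j`-th if `j = 1, 2`, and the first if `j = 3`, because `ord(10φ₀⁹) ≥ 9b > b`.
The path `(0, t, t, 0)` attains the ratio `4`.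
-/

namespace PowerSeries

theorem order_ofNat_mul {K : Type*} [Field K] [CharZero K] (n : ℕ) [n.AtLeastTwo] (φ : K⟦X⟧) :
    (ofNat(n) * φ).order = φ.order := by
  have hunit : IsUnit (OfNat.ofNat n : K⟦X⟧) := by
    rw [← map_ofNat (C (R := K)) n]
    exact (isUnit_iff_ne_zero.mpr (NeZero.ne _)).map C
  rw [order_mul, order_zero_of_unit hunit, zero_add]

theorem order_add_eq_left {R : Type*} [Semiring R] {φ ψ : R⟦X⟧} (h : φ.order < ψ.order) :
    (φ + ψ).order = φ.order := by
  rw [order_add_of_order_ne _ _ h.ne, min_eq_left h.le]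

end PowerSeries

section tupleOrder

variable {m : ℕ}

theorem tupleOrder_le (ψ : Fin m → PowerSeries ℂ) (i : Fin m) : tupleOrder ψ ≤ (ψ i).order :=
  iInf_le _ i

theorem exists_order_eq_tupleOrder [NeZero m] (ψ : Fin m → PowerSeries ℂ) :
    ∃ i, (ψ i).order = tupleOrder ψ :=
  ciInf_mem _

theorem tupleOrder_eq_iff [NeZero m] (ψ : Fin m → PowerSeries ℂ) (n : ℕ∞) :
    tupleOrder ψ = n ↔ (∃ i, (ψ i).order = n) ∧ ∀ i, n ≤ (ψ i).order :=
  ciInf_eq_iff _ n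

theorem tupleOrder_zero : tupleOrder (0 : Fin m → PowerSeries ℂ) = ⊤ := by
  simp [tupleOrder]

theorem one_le_tupleOrder {ψ : Fin m → PowerSeries ℂ}
    (hψ : ∀ i, PowerSeries.constantCoeff (ψ i) = 0) : 1 ≤ tupleOrder ψ :=
  le_iInf fun i => Order.one_le_iff_ne_zero.mpr
    (PowerSeries.order_ne_zero_iff_constCoeff_eq_zero.mpr (hψ i))

end tupleOrder

section lojPathSet

variable {n : ℕ} {f : MvPolynomial (Fin n) ℂ}

theorem div_mem_lojPathSet {φ : Fin n → PowerSeries ℂ}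
    (hφ : ∀ i, PowerSeries.constantCoeff (φ i) = 0) {a b : ℕ} (hb : 0 < b)
    (hφb : tupleOrder φ = b) (hφa : tupleOrder (fun i => aeval φ (pderiv i f)) = a) :
    (a / b : ℝ) ∈ lojPathSet n f := by
  refine ⟨φ, ?_, hφ, a, b, hb, hφb, hφa, rfl⟩
  rintro rfl
  simp [tupleOrder_zero] at hφb

theorem le_of_mem_lojPathSet {k : ℕ}
    (hf : ∀ φ : Fin n → PowerSeries ℂ, (∀ i, PowerSeries.constantCoeff (φ i) = 0) →
      tupleOrder (fun i => aeval φ (pderiv i f)) ≤ k * tupleOrder φ)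
    {r : ℝ} (hr : r ∈ lojPathSet n f) : r ≤ k := by
  obtain ⟨φ, -, hφ, a, b, hb, hφb, hφa, rfl⟩ := hr
  have hab : a ≤ k * b := by
    have := hf φ hφ
    rw [hφb, hφa] at this
    exact_mod_cast this
  rw [div_le_iff₀ (by exact_mod_cast hb)]
  exact_mod_cast hab

end lojPathSet

noncomputable def kopPoly : MvPolynomial (Fin 4) ℂ :=
  X 0 * X 3 + X 0 ^ 10 + X 1 ^ 5 + X 2 ^ 5

theorem kopPoly_isWeightedHomogeneous : kopPoly.IsWeightedHomogeneous ![1, 2, 2, 9] 10 := by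
  have hX (i : Fin 4) := isWeightedHomogeneous_X ℂ ![1, 2, 2, 9] i
  exact (((hX 0).mul (hX 3)).add ((hX 0).pow 10)).add ((hX 1).pow 5) |>.add ((hX 2).pow 5)

theorem aeval_pderiv_kopPoly (φ : Fin 4 → PowerSeries ℂ) :
    (fun i => aeval φ (pderiv i kopPoly)) =
      ![φ 3 + 10 * φ 0 ^ 9, 5 * φ 1 ^ 4, 5 * φ 2 ^ 4, φ 0] := by
  ext1 i
  fin_cases i <;> simp [kopPoly, pderiv_X]

theorem tupleOrder_grad_kopPoly_le (φ : Fin 4 → PowerSeries ℂ)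
    (hφ : ∀ i, PowerSeries.constantCoeff (φ i) = 0) :
    tupleOrder (fun i => aeval φ (pderiv i kopPoly)) ≤ 4 * tupleOrder φ := by
  have hle : tupleOrder φ ≤ 4 * tupleOrder φ := le_mul_of_one_le_left' (by norm_num)
  have hquartic (j : Fin 4) : (5 * φ j ^ 4).order = 4 * (φ j).order := by
    rw [PowerSeries.order_ofNat_mul, PowerSeries.order_pow, nsmul_eq_mul, Nat.cast_ofNat]
  obtain ⟨j, hj⟩ := exists_order_eq_tupleOrder φ
  rw [aeval_pderiv_kopPoly]
  fin_cases j <;> simp only [Fin.zero_eta, Fin.mk_one, Fin.reduceFinMk] at hj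
  · exact (tupleOrder_le _ 3).trans (hj.le.trans hle)
  · exact (tupleOrder_le _ 1).trans_eq (hj ▸ hquartic 1)
  · exact (tupleOrder_le _ 2).trans_eq (hj ▸ hquartic 2)
  · by_cases hb_top : tupleOrder φ = ⊤
    · simp [hb_top]
    obtain ⟨c, hc⟩ := ENat.ne_top_iff_exists.mp hb_top
    have hc1 : 1 ≤ c := by exact_mod_cast (hc ▸ one_le_tupleOrder hφ : (1 : ℕ∞) ≤ c)
    have hlt : (φ 3).order < (10 * φ 0 ^ 9).order := by
      rw [PowerSeries.order_ofNat_mul, PowerSeries.order_pow, nsmul_eq_mul, hj, ← hc]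
      calc (c : ℕ∞) < ((9 * c : ℕ) : ℕ∞) := by exact_mod_cast (by omega : c < 9 * c)
        _ ≤ 9 * (φ 0).order := by push_cast; gcongr; exact hc ▸ tupleOrder_le φ 0
    calc _ ≤ (φ 3 + 10 * φ 0 ^ 9).order := tupleOrder_le _ 0
      _ = tupleOrder φ := (PowerSeries.order_add_eq_left hlt).trans hj
      _ ≤ 4 * tupleOrder φ := hle

theorem four_mem_lojPathSet_kopPoly : (4 : ℝ) ∈ lojPathSet 4 kopPoly := by
  have h := div_mem_lojPathSet (f := kopPoly) (φ := ![0, PowerSeries.X, PowerSeries.X, 0])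
    (a := 4) (b := 1) ?_ one_pos ?_ ?_
  · simpa using h
  · intro i; fin_cases i <;> simp
  · rw [tupleOrder_eq_iff]
    refine ⟨⟨1, by simp⟩, fun i => ?_⟩
    fin_cases i <;> simp
  · rw [aeval_pderiv_kopPoly, tupleOrder_eq_iff]
    refine ⟨⟨1, by simp [PowerSeries.order_ofNat_mul]⟩, fun i => ?_⟩
    fin_cases i <;> simp [PowerSeries.order_ofNat_mul]

/-- The polynomial `f = z₁z₄ + z₁¹⁰ + z₂⁵ + z₃⁵`, weak weighted homogeneous
of type `(10; 1, 2, 2, 9)`, has Łojasiewicz exponent `L(f) = 4`, which is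
strictly smaller than `min(maxᵢ(d/wᵢ − 1), μ(f)) = min(10, 16) = 10`: the
Krasiński–Oleksik–Płoski formula fails in 4 variables. -/
theorem loj_exponent_kop_counterexample :
    letI f : MvPolynomial (Fin 4) ℂ :=
      X 0 * X 3 + X 0 ^ 10 + X 1 ^ 5 + X 2 ^ 5
    f.IsWeightedHomogeneous ![1, 2, 2, 9] 10 ∧
    sSup (lojPathSet 4 f) = 4 ∧
    (4 : ℝ) < min (10 : ℝ) 16 ∧ min (10 : ℝ) 16 = 10 := by
  refine ⟨kopPoly_isWeightedHomogeneous, ?_, by norm_num, by norm_num⟩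
  refine IsGreatest.csSup_eq ⟨four_mem_lojPathSet_kopPoly, fun r hr => ?_⟩
  exact_mod_cast le_of_mem_lojPathSet (k := 4) tupleOrder_grad_kopPoly_le hr
end

section
/- For a weighted homogeneous polynomial f of type (d; w) in n variables with isolated singularity at 0, for every index i there exists either a monomial z_i^{q} or a monomial z_i^{q} z_j (j ≠ i, q ≥ 1) appearing in f with nonzero coefficient. -/
/-!
If neither `zᵢ^q` nor any `zᵢ^q z_j` (`q ≥ 1`) occurs in `f`, then, since `∇f(0) = 0` also rules
out the linear monomials `z_j`, no partial derivative `∂_j f` contains a monomial that is a pure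
power of `zᵢ`. Hence every `∂_j f` vanishes identically on the `zᵢ`-axis, which contradicts the
isolatedness of the critical point `0`.
-/

open MvPolynomial Filter Topology

lemma eval_piSingle_eq_zero {σ R : Type*} [CommSemiring R] [DecidableEq σ]
    {p : MvPolynomial σ R} {i : σ} (hp : ∀ q, coeff (Finsupp.single i q) p = 0) (t : R) :
    eval (Pi.single i t) p = 0 := by
  rw [eval_eq]
  refine Finset.sum_eq_zero fun m _ => ?_
  by_cases hm : m = Finsupp.single i (m i)
  · rw [hm, hp, zero_mul]
  · obtain ⟨k, hk⟩ : ∃ k, m k ≠ Finsupp.single i (m i) k := by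
      by_contra! h
      exact hm (Finsupp.ext h)
    have hki : k ≠ i := by
      rintro rfl
      simp at hk
    rw [Finsupp.single_eq_of_ne hki] at hk
    refine mul_eq_zero_of_right _ (Finset.prod_eq_zero (Finsupp.mem_support_iff.mpr hk) ?_)
    simp [Pi.single_eq_of_ne hki, hk]

lemma coeff_single_pderiv_eq_zero {σ R : Type*} [CommSemiring R] [DecidableEq σ]
    {f : MvPolynomial σ R} {i j : σ} (hlin : coeff (Finsupp.single j 1) f = 0)
    (hpure : ∀ q, 1 ≤ q → coeff (Finsupp.single i q) f = 0)
    (hsemi : ∀ q, j ≠ i → 1 ≤ q → coeff (Finsupp.single i q + Finsupp.single j 1) f = 0)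
    (q : ℕ) : coeff (Finsupp.single i q) (pderiv j f) = 0 := by
  suffices coeff (Finsupp.single i q + Finsupp.single j 1) f = 0 by
    rw [coeff_pderiv, this, zero_mul]
  by_cases hji : j = i
  · subst hji
    rw [← Finsupp.single_add]
    exact hpure _ le_add_self
  · rcases q with _ | q
    · simpa using hlin
    · exact hsemi _ hji q.succ_pos

lemma not_forall_piSingle_of_eventually_eq_zero {ι 𝕜 : Type*} [DecidableEq ι]
    [NontriviallyNormedField 𝕜] {P : (ι → 𝕜) → Prop}
    (hP : ∀ᶠ z in 𝓝 0, P z → z = 0) (i : ι) : ¬ ∀ t, P (Pi.single i t) := by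
  intro h
  have hcont : Tendsto (Pi.single (M := fun _ => 𝕜) i) (𝓝 0) (𝓝 0) := by
    simpa using (continuous_single (A := fun _ : ι => 𝕜) i).tendsto 0
  have hzero : ∀ᶠ t in 𝓝[≠] (0 : 𝕜), t = 0 := nhdsWithin_le_nhds <|
    (hcont.eventually hP).mono fun t ht => by simpa using ht (h t)
  obtain ⟨t, ht, ht'⟩ := (hzero.and self_mem_nhdsWithin).exists
  exact ht' ht

theorem exists_pure_or_semipure_monomial_general (n : ℕ)
    (f : MvPolynomial (Fin n) ℂ)
    (hsing : ∀ i, eval (0 : Fin n → ℂ) (pderiv i f) = 0)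
    (hiso : ∀ᶠ z in nhds (0 : Fin n → ℂ),
      (∀ i, eval z (pderiv i f) = 0) → z = 0) :
    ∀ i : Fin n,
      (∃ q : ℕ, 1 ≤ q ∧ coeff (Finsupp.single i q) f ≠ 0) ∨
      (∃ q : ℕ, ∃ j : Fin n, j ≠ i ∧ 1 ≤ q ∧
        coeff (Finsupp.single i q + Finsupp.single j 1) f ≠ 0) := by
  intro i
  by_contra! ⟨hpure, hsemi⟩
  have hlin (j : Fin n) : coeff (Finsupp.single j 1) f = 0 := by
    simpa [eval_zero, constantCoeff_eq, coeff_pderiv] using hsing j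
  exact not_forall_piSingle_of_eventually_eq_zero hiso i fun t j =>
    eval_piSingle_eq_zero (coeff_single_pderiv_eq_zero (hlin j) hpure (hsemi · j)) t

/-- For a weighted homogeneous polynomial with an isolated singularity at `0`,
for every index `i` there is a monomial `zᵢ^q` or `zᵢ^q z_j` (`j ≠ i`, `q ≥ 1`)
appearing in `f` with nonzero coefficient. -/
theorem exists_pure_or_semipure_monomial (n : ℕ) (w : Fin n → ℕ) (d : ℕ)
    (hw : ∀ i, 0 < w i)
    (f : MvPolynomial (Fin n) ℂ)
    (hf : f.IsWeightedHomogeneous w d)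
    (hsing : ∀ i, eval (0 : Fin n → ℂ) (pderiv i f) = 0)
    (hiso : ∀ᶠ z in nhds (0 : Fin n → ℂ),
      (∀ i, eval z (pderiv i f) = 0) → z = 0) :
    ∀ i : Fin n,
      (∃ q : ℕ, 1 ≤ q ∧ coeff (Finsupp.single i q) f ≠ 0) ∨
      (∃ q : ℕ, ∃ j : Fin n, j ≠ i ∧ 1 ≤ q ∧
        coeff (Finsupp.single i q + Finsupp.single j 1) f ≠ 0) :=
  exists_pure_or_semipure_monomial_general n f hsing hiso
end
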